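/- For all a, b, c : Bool, let F : Bool → Bool → Bool be the degree-two Boolean function F q₁ q₂ = xor a (xor (b && q₁) (xor (c && q₂) (q₁ && q₂))) (any two-variable Boolean polynomial over GF(2) whose q₁q₂ coefficient is 1; this covers OR, NOR, AND, NAND, the implications L₁, L₂ and their negations NL₁, NL₂). Then the three-qubit state ψ_F is logically but not strongly contextual for the measurements Y and Z at each party: there exists a consistent global assignment, and there exist a context c : Fin 3 → M and a possible outcome o in c such that no consistent global assignment g satisfies g i (c i) = o i for all i. -/
import Mathlib


noncomputable section

/-- Inner product of two `n`-qubit states `(Fin n → Bool) → ℂ`. -/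
def inner' {n : ℕ} (φ ψ : (Fin n → Bool) → ℂ) : ℂ :=
  ∑ s : Fin n → Bool, (starRingEnd ℂ) (φ s) * ψ s

/-- Tensor product of local vectors. -/
def tensor {n : ℕ} (v : Fin n → Bool → ℂ) : (Fin n → Bool) → ℂ :=
  fun s => ∏ i, v i (s i)

/-- `Y`-measurement eigenvectors: `yvec false = (1/√2, i/√2)`,
`yvec true = (1/√2, -i/√2)`. -/
def yvec (b : Bool) : Bool → ℂ :=
  fun b' => if b' then (if b then -Complex.I else Complex.I) * (Real.sqrt 2 : ℂ)⁻¹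
    else (Real.sqrt 2 : ℂ)⁻¹

/-- `Z`-measurement eigenvectors. -/
def evec (b : Bool) : Bool → ℂ := fun b' => if b = b' then 1 else 0

/-- The measurement set: `Y` or `Z` at each site. -/
inductive M | Y | Z

/-- The eigenvector family of each measurement. -/
def mvec : M → Bool → Bool → ℂ
  | M.Y => yvec
  | M.Z => evec

/-- The amplitude of outcome `o` in context `c` for a 3-qubit state `ψ`. -/
def amp (ψ : (Fin 3 → Bool) → ℂ) (c : Fin 3 → M) (o : Fin 3 → Bool) : ℂ :=
  inner' (tensor fun i => mvec (c i) (o i)) ψ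

/-- A global assignment is consistent if its induced outcome is possible in
every context. -/
def consistent (ψ : (Fin 3 → Bool) → ℂ) (g : Fin 3 → M → Bool) : Prop :=
  ∀ c : Fin 3 → M, amp ψ c (fun i => g i (c i)) ≠ 0

/-- The balanced three-qubit state with functional dependency `F`. -/
def psiF (F : Bool → Bool → Bool) : (Fin 3 → Bool) → ℂ :=
  fun s => if s 2 = F (s 0) (s 1) then (1/2 : ℂ) else 0

/- ### Auxiliary Gaussian-integer model -/

instance : DecidableEq M := fun a b => by
  cases a <;> cases b <;> first
    | exact isTrue rfl
    | exact isFalse (by intro h; exact M.noConfusion h)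

instance : Fintype M :=
  ⟨{M.Y, M.Z}, fun x => by cases x <;> simp⟩

open GaussianInt in
/-- Gaussian-integer version of the conjugated eigenvector entries:
`gvec m b q = (√2)^{[m = Y]} * conj (mvec m b q)`. -/
def gvec : M → Bool → Bool → GaussianInt
  | M.Y, b, q => if q then (if b then ⟨0, 1⟩ else ⟨0, -1⟩) else 1
  | M.Z, b, q => if b = q then 1 else 0

/-- Gaussian-integer version of the amplitude (up to nonzero scalar). -/
def ampG (F : Bool → Bool → Bool) (c : Fin 3 → M) (o : Fin 3 → Bool) : GaussianInt :=
  ∑ s : Fin 3 → Bool,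
    (∏ i, gvec (c i) (o i) (s i)) * (if s 2 = F (s 0) (s 1) then 1 else 0)

lemma conj_mvec (m : M) (b q : Bool) :
    (starRingEnd ℂ) (mvec m b q) =
      (if m = M.Y then ((Real.sqrt 2 : ℂ))⁻¹ else 1) *
        GaussianInt.toComplex (gvec m b q) := by
  cases m <;> cases b <;> cases q <;>
    simp [mvec, yvec, evec, gvec, GaussianInt.toComplex_def, map_mul, map_inv₀,
      Complex.conj_I] <;> ring

lemma amp_eq (F : Bool → Bool → Bool) (c : Fin 3 → M) (o : Fin 3 → Bool) :
    amp (psiF F) c o =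
      ((2 : ℂ)⁻¹ * ∏ i, (if c i = M.Y then ((Real.sqrt 2 : ℂ))⁻¹ else 1)) *
        GaussianInt.toComplex (ampG F c o) := by
  unfold amp inner' tensor psiF ampG
  rw [map_sum, Finset.mul_sum]
  apply Finset.sum_congr rfl
  intro s _
  rw [map_prod]
  rw [Finset.prod_congr rfl (fun i _ => conj_mvec (c i) (o i) (s i)),
    Finset.prod_mul_distrib, map_mul, map_prod]
  by_cases h : s 2 = F (s 0) (s 1) <;> simp [h] <;> ring

lemma amp_ne_zero_iff (F : Bool → Bool → Bool) (c : Fin 3 → M) (o : Fin 3 → Bool) :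
    amp (psiF F) c o ≠ 0 ↔ ampG F c o ≠ 0 := by
  rw [amp_eq]
  have h2 : ((Real.sqrt 2 : ℂ))⁻¹ ≠ 0 := by
    simp only [ne_eq, inv_eq_zero, Complex.ofReal_eq_zero]
    positivity
  have hC : ((2 : ℂ)⁻¹ * ∏ i, (if c i = M.Y then ((Real.sqrt 2 : ℂ))⁻¹ else 1)) ≠ 0 := by
    apply mul_ne_zero (by norm_num)
    apply Finset.prod_ne_zero_iff.2
    intro i _
    split <;> simp [h2]
  constructor
  · intro h hz
    exact h (by simp [hz])
  · intro h hz
    rcases mul_eq_zero.1 hz with h' | h'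
    · exact hC h'
    · exact h (by simpa using h')

lemma consistent_iff (F : Bool → Bool → Bool) (g : Fin 3 → M → Bool) :
    consistent (psiF F) g ↔ ∀ c : Fin 3 → M, ampG F c (fun i => g i (c i)) ≠ 0 := by
  unfold consistent
  exact forall_congr' fun c => amp_ne_zero_iff F c _

set_option maxRecDepth 40000 in
set_option maxHeartbeats 4000000 in
/-- The fully decidable core statement. -/
lemma key (a b c : Bool) :
    (∃ g : Fin 3 → M → Bool, ∀ ctx : Fin 3 → M,
        ampG (fun q₁ q₂ =>
          Bool.xor a (Bool.xor (b && q₁) (Bool.xor (c && q₂) (q₁ && q₂)))) ctx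
          (fun i => g i (ctx i)) ≠ 0) ∧
    ∃ (ctx : Fin 3 → M) (o : Fin 3 → Bool),
      ampG (fun q₁ q₂ =>
          Bool.xor a (Bool.xor (b && q₁) (Bool.xor (c && q₂) (q₁ && q₂)))) ctx o ≠ 0 ∧
      ∀ g : Fin 3 → M → Bool,
        (∀ ctx' : Fin 3 → M,
          ampG (fun q₁ q₂ =>
            Bool.xor a (Bool.xor (b && q₁) (Bool.xor (c && q₂) (q₁ && q₂)))) ctx'
            (fun i => g i (ctx' i)) ≠ 0) →
        ¬ ∀ i, g i (ctx i) = o i := by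
  revert a b c
  decide

/-- For every degree-two Boolean function
`F q₁ q₂ = a ⊕ (b && q₁) ⊕ (c && q₂) ⊕ (q₁ && q₂)` (any two-variable polynomial
over GF(2) with `q₁q₂`-coefficient `1`), the state `ψ_F` is logically but not
strongly contextual for `Y`/`Z` measurements. -/
theorem degree_two_logically_not_strongly_contextual (a b c : Bool)
    (F : Bool → Bool → Bool)
    (hF : ∀ q₁ q₂, F q₁ q₂ =
      Bool.xor a (Bool.xor (b && q₁) (Bool.xor (c && q₂) (q₁ && q₂)))) :
    (∃ g : Fin 3 → M → Bool, consistent (psiF F) g) ∧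
    ∃ (ctx : Fin 3 → M) (o : Fin 3 → Bool), amp (psiF F) ctx o ≠ 0 ∧
      ∀ g : Fin 3 → M → Bool, consistent (psiF F) g →
        ¬ ∀ i, g i (ctx i) = o i := by
  have hFe : F = fun q₁ q₂ =>
      Bool.xor a (Bool.xor (b && q₁) (Bool.xor (c && q₂) (q₁ && q₂))) :=
    funext fun q₁ => funext fun q₂ => hF q₁ q₂
  subst hFe
  obtain ⟨⟨g, hg⟩, ctx, o, ho, hno⟩ := key a b c
  refine ⟨⟨g, (consistent_iff _ g).2 hg⟩, ctx, o, (amp_ne_zero_iff _ _ _).2 ho, ?_⟩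
  intro g' hg'
  exact hno g' ((consistent_iff _ g').1 hg')
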